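/- Let μ be a Borel measure on (0,∞), let η < η̃ be real numbers with ∫_{(0,∞)} (1+x)^{-η̃} dμ(x) < ∞, and let y : [0,∞) → ℝ be measurable with y(0)² + ∫_{(0,∞)} y(x)² (1+x)^η dμ(x) < ∞. Then for every t > 0, |y(0) + ∫_{(0,∞)} e^{-tx} y(x) dμ(x)|² ≤ (1 + ∫_{(0,∞)} (1+x)^{-η̃} dμ(x)) · κ(η̃−η)² · (1 + t^{-(η̃−η)}) · (y(0)² + ∫_{(0,∞)} y(x)² (1+x)^η dμ(x)), where κ(δ) = max{1, 2^{-δ/2} δ^{δ/2}}. In particular, for each T > 0 there is a constant C with |g(t)| ≤ C t^{-(η̃−η)/2} for all t ∈ (0,T], where g(t) = y(0) + ∫_{(0,∞)} e^{-tx} y(x) dμ(x). -/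

import Mathlib

/-!
Cauchy–Schwarz for `δ₀ + μ` with weight `(1 + x) ^ η` bounds the square of the projection by
`‖y‖²_η · (1 + ∫ e^{-2tx} (1 + x)^{-η} dμ)`. Writing `(1 + x)^{-η} = (1 + x)^{η̃-η} (1 + x)^{-η̃}`,
the elementary bound `e^{-2tx} (1 + x)^δ ≤ max {1, (δ / 2t)^δ} ≤ κ(δ)² (1 + t^{-δ})` for `x ≥ 0`
reduces the remaining integral to `∫ (1 + x)^{-η̃} dμ`. Taking square roots on `(0, T]`, where
`1 + t^{-δ} ≤ (1 + T^δ) t^{-δ}`, gives the `t^{-δ/2}` singularity.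
-/

open Real MeasureTheory

noncomputable def kappa (δ : ℝ) : ℝ := max 1 ((2 : ℝ) ^ (-(δ / 2)) * δ ^ (δ / 2))

lemma rpow_le_exp_mul_sub_one {a δ : ℝ} (ha : 0 < a) (hδ : 0 ≤ δ) :
    a ^ δ ≤ exp (δ * (a - 1)) := by
  calc a ^ δ ≤ exp (a - 1) ^ δ := by
        gcongr
        linarith [add_one_le_exp (a - 1)]
    _ = exp (δ * (a - 1)) := by rw [← exp_mul, mul_comm]

lemma one_add_rpow_le_max_mul_exp {δ s x : ℝ} (hδ : 0 ≤ δ) (hs : 0 < s) (hx : 0 ≤ x) :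
    (1 + x) ^ δ ≤ max 1 ((δ / s) ^ δ) * exp (s * x) := by
  rcases le_or_gt δ s with hδs | hsδ
  · calc (1 + x) ^ δ ≤ exp (δ * x) := by
          simpa using rpow_le_exp_mul_sub_one (a := 1 + x) (by linarith) hδ
      _ ≤ 1 * exp (s * x) := by rw [one_mul]; gcongr
      _ ≤ _ := by gcongr; exact le_max_left _ _
  · have hδ0 : 0 < δ := hs.trans hsδ
    -- `(1 + x) ^ δ * exp (-(s * x))` is maximal at `1 + x = δ / s`
    have hsplit : (1 + x) ^ δ = (δ / s) ^ δ * (s * (1 + x) / δ) ^ δ := by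
      rw [← mul_rpow (by positivity) (by positivity)]
      congr 1
      field_simp
    calc (1 + x) ^ δ ≤ (δ / s) ^ δ * exp (δ * (s * (1 + x) / δ - 1)) := by
          rw [hsplit]; gcongr; exact rpow_le_exp_mul_sub_one (by positivity) hδ
      _ ≤ (δ / s) ^ δ * exp (s * x) := by
          refine mul_le_mul_of_nonneg_left (exp_le_exp.mpr ?_) (by positivity)
          rw [mul_sub, mul_div_cancel₀ _ hδ0.ne']
          linarith
      _ ≤ _ := by gcongr; exact le_max_right _ _

lemma div_two_rpow_self_le_kappa_sq {δ : ℝ} (hδ : 0 ≤ δ) : (δ / 2) ^ δ ≤ kappa δ ^ 2 := by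
  have hsq : ((2 : ℝ) ^ (-(δ / 2)) * δ ^ (δ / 2)) ^ 2 = (δ / 2) ^ δ := by
    rw [mul_pow, ← rpow_mul_natCast zero_le_two, ← rpow_mul_natCast hδ]
    push_cast
    rw [show -(δ / 2) * 2 = -δ by ring, show δ / 2 * 2 = δ by ring, rpow_neg zero_le_two,
      div_rpow hδ zero_le_two, div_eq_mul_inv, mul_comm]
  rw [← hsq]
  exact pow_le_pow_left₀ (by positivity) (le_max_right _ _) 2

lemma max_one_div_two_mul_rpow_le {δ t : ℝ} (hδ : 0 ≤ δ) (ht : 0 < t) :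
    max 1 ((δ / (2 * t)) ^ δ) ≤ kappa δ ^ 2 * (1 + t ^ (-δ)) := by
  have hκ : 1 ≤ kappa δ ^ 2 := one_le_pow₀ (le_max_left _ _)
  have ht' : 0 ≤ t ^ (-δ) := rpow_nonneg ht.le _
  have hsplit : (δ / (2 * t)) ^ δ = (δ / 2) ^ δ * t ^ (-δ) := by
    rw [div_mul_eq_div_div, div_eq_mul_inv _ t, mul_rpow (by positivity) (by positivity),
      inv_rpow ht.le, rpow_neg ht.le]
  rw [hsplit]
  apply max_le
  · nlinarith
  · nlinarith [div_two_rpow_self_le_kappa_sq hδ]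

section CauchySchwarz

variable {α : Type*} [MeasurableSpace α] {μ : Measure α}

lemma sq_integral_mul_le {f g : α → ℝ} (hf : MemLp f 2 μ) (hg : MemLp g 2 μ) :
    (∫ a, f a * g a ∂μ) ^ 2 ≤ (∫ a, f a ^ 2 ∂μ) * ∫ a, g a ^ 2 ∂μ := by
  have hpq : (2 : ℝ).HolderConjugate 2 := .two_two
  have h2 : ENNReal.ofReal 2 = 2 := by norm_num
  have hnorm_sq (h : α → ℝ) : ∫ a, ‖h a‖ ^ (2 : ℝ) ∂μ = ∫ a, h a ^ 2 ∂μ := by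
    simp only [rpow_two, norm_eq_abs, sq_abs]
  have holder := integral_mul_norm_le_Lp_mul_Lq hpq (h2 ▸ hf) (h2 ▸ hg)
  rw [hnorm_sq, hnorm_sq, ← sqrt_eq_rpow, ← sqrt_eq_rpow] at holder
  have habs : |∫ a, f a * g a ∂μ| ≤ √(∫ a, f a ^ 2 ∂μ) * √(∫ a, g a ^ 2 ∂μ) := by
    refine (abs_integral_le_integral_abs).trans (le_of_eq_of_le ?_ holder)
    simp only [abs_mul, norm_eq_abs]
  calc (∫ a, f a * g a ∂μ) ^ 2 = |∫ a, f a * g a ∂μ| ^ 2 := (sq_abs _).symm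
    _ ≤ (√(∫ a, f a ^ 2 ∂μ) * √(∫ a, g a ^ 2 ∂μ)) ^ 2 := by gcongr
    _ = _ := by
      rw [mul_pow, sq_sqrt (integral_nonneg fun _ => sq_nonneg _),
        sq_sqrt (integral_nonneg fun _ => sq_nonneg _)]

lemma sq_integral_mul_le_weighted {f g w : α → ℝ} (hf : AEStronglyMeasurable f μ)
    (hg : AEStronglyMeasurable g μ) (hw : AEStronglyMeasurable w μ) (hw_pos : ∀ᵐ a ∂μ, 0 < w a)
    (hfw : Integrable (fun a => f a ^ 2 / w a) μ) (hgw : Integrable (fun a => g a ^ 2 * w a) μ) :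
    (∫ a, f a * g a ∂μ) ^ 2 ≤ (∫ a, f a ^ 2 / w a ∂μ) * ∫ a, g a ^ 2 * w a ∂μ := by
  have hsqrt : AEStronglyMeasurable (fun a => √(w a)) μ :=
    continuous_sqrt.comp_aestronglyMeasurable hw
  have hf2 : (fun a => (f a / √(w a)) ^ 2) =ᵐ[μ] fun a => f a ^ 2 / w a := by
    filter_upwards [hw_pos] with a ha
    rw [div_pow, sq_sqrt ha.le]
  have hg2 : (fun a => (g a * √(w a)) ^ 2) =ᵐ[μ] fun a => g a ^ 2 * w a := by
    filter_upwards [hw_pos] with a ha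
    rw [mul_pow, sq_sqrt ha.le]
  have hf' : MemLp (fun a => f a / √(w a)) 2 μ :=
    (memLp_two_iff_integrable_sq (hf.div₀ hsqrt)).mpr (hfw.congr hf2.symm)
  have hg' : MemLp (fun a => g a * √(w a)) 2 μ :=
    (memLp_two_iff_integrable_sq (hg.mul hsqrt)).mpr (hgw.congr hg2.symm)
  have hfg : (fun a => f a * g a) =ᵐ[μ] fun a => (f a / √(w a)) * (g a * √(w a)) := by
    filter_upwards [hw_pos] with a ha
    field_simp [(sqrt_pos.mpr ha).ne']
  calc (∫ a, f a * g a ∂μ) ^ 2 = (∫ a, (f a / √(w a)) * (g a * √(w a)) ∂μ) ^ 2 := by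
        rw [integral_congr_ae hfg]
    _ ≤ (∫ a, (f a / √(w a)) ^ 2 ∂μ) * ∫ a, (g a * √(w a)) ^ 2 ∂μ := sq_integral_mul_le hf' hg'
    _ = _ := by rw [integral_congr_ae hf2, integral_congr_ae hg2]

end CauchySchwarz

lemma sq_add_le_mul_one_add {a c A B : ℝ} (hA : 0 ≤ A) (hB : 0 ≤ B) (hc : c ^ 2 ≤ A * B) :
    (a + c) ^ 2 ≤ (a ^ 2 + A) * (1 + B) := by
  have hc' : |c| ≤ √A * √B := by rw [← sqrt_mul hA]; exact abs_le_sqrt hc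
  have hac : a * c ≤ |a| * (√A * √B) :=
    (le_abs_self _).trans ((abs_mul a c).trans_le (mul_le_mul_of_nonneg_left hc' (abs_nonneg a)))
  nlinarith [sq_nonneg (|a| * √B - √A), sq_sqrt hA, sq_sqrt hB, sq_abs a]

lemma exp_neg_mul_sq_div_rpow_le {η ηt t x : ℝ} (hη : η ≤ ηt) (ht : 0 < t) (hx : 0 ≤ x) :
    exp (-(t * x)) ^ 2 / (1 + x) ^ η ≤
      kappa (ηt - η) ^ 2 * (1 + t ^ (-(ηt - η))) * (1 + x) ^ (-ηt) := by
  have h1x : 0 < 1 + x := by linarith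
  have hgrowth : (1 + x) ^ (ηt - η) ≤
      kappa (ηt - η) ^ 2 * (1 + t ^ (-(ηt - η))) * exp (2 * t * x) :=
    calc (1 + x) ^ (ηt - η) ≤ max 1 (((ηt - η) / (2 * t)) ^ (ηt - η)) * exp (2 * t * x) := by
          simpa only [mul_assoc] using
            one_add_rpow_le_max_mul_exp (sub_nonneg.mpr hη) (by positivity : 0 < 2 * t) hx
      _ ≤ _ := by gcongr; exact max_one_div_two_mul_rpow_le (sub_nonneg.mpr hη) ht
  have hsplit : exp (-(t * x)) ^ 2 / (1 + x) ^ η =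
      exp (-(2 * t * x)) * (1 + x) ^ (ηt - η) * (1 + x) ^ (-ηt) := by
    rw [mul_assoc, ← rpow_add h1x, show ηt - η + -ηt = -η by ring, rpow_neg h1x.le,
      ← exp_nat_mul, div_eq_mul_inv]
    push_cast
    ring_nf
  calc exp (-(t * x)) ^ 2 / (1 + x) ^ η
      ≤ exp (-(2 * t * x)) * (kappa (ηt - η) ^ 2 * (1 + t ^ (-(ηt - η))) * exp (2 * t * x)) *
          (1 + x) ^ (-ηt) := by rw [hsplit]; gcongr
    _ = _ := by rw [exp_neg]; field_simp

theorem sq_abs_projection_le (μ : Measure ℝ) {η ηt : ℝ} (hη : η ≤ ηt) {y : ℝ → ℝ}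
    (hy : Measurable y) (hI : IntegrableOn (fun x => (1 + x) ^ (-ηt)) (Set.Ioi 0) μ)
    (hN : IntegrableOn (fun x => y x ^ 2 * (1 + x) ^ η) (Set.Ioi 0) μ) {t : ℝ} (ht : 0 < t) :
    |y 0 + ∫ x in Set.Ioi 0, exp (-(t * x)) * y x ∂μ| ^ 2 ≤
      (1 + ∫ x in Set.Ioi 0, (1 + x) ^ (-ηt) ∂μ) * kappa (ηt - η) ^ 2 *
        (1 + t ^ (-(ηt - η))) * (y 0 ^ 2 + ∫ x in Set.Ioi 0, y x ^ 2 * (1 + x) ^ η ∂μ) := by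
  set K := kappa (ηt - η) ^ 2 * (1 + t ^ (-(ηt - η)))
  set I := ∫ x in Set.Ioi 0, (1 + x) ^ (-ηt) ∂μ
  set A := ∫ x in Set.Ioi 0, y x ^ 2 * (1 + x) ^ η ∂μ
  set B := ∫ x in Set.Ioi 0, exp (-(t * x)) ^ 2 / (1 + x) ^ η ∂μ
  have hK : 1 ≤ K := one_le_mul_of_one_le_of_one_le (one_le_pow₀ (le_max_left _ _))
    (le_add_of_nonneg_right (rpow_nonneg ht.le _))
  have hpos : ∀ x ∈ Set.Ioi (0 : ℝ), 0 < 1 + x := fun x hx => by linarith [Set.mem_Ioi.mp hx]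
  have hI0 : 0 ≤ I :=
    setIntegral_nonneg measurableSet_Ioi fun x hx => (rpow_pos_of_pos (hpos x hx) _).le
  have hA0 : 0 ≤ A := setIntegral_nonneg measurableSet_Ioi fun x hx =>
    mul_nonneg (sq_nonneg _) (rpow_pos_of_pos (hpos x hx) _).le
  have hB0 : 0 ≤ B := setIntegral_nonneg measurableSet_Ioi fun x hx =>
    div_nonneg (sq_nonneg _) (rpow_pos_of_pos (hpos x hx) _).le
  have hdecay : ∀ x ∈ Set.Ioi (0 : ℝ), exp (-(t * x)) ^ 2 / (1 + x) ^ η ≤ K * (1 + x) ^ (-ηt) :=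
    fun x hx => exp_neg_mul_sq_div_rpow_le hη ht (Set.mem_Ioi.mp hx).le
  have hgw : IntegrableOn (fun x => exp (-(t * x)) ^ 2 / (1 + x) ^ η) (Set.Ioi 0) μ := by
    refine (hI.const_mul K).mono' (Measurable.aestronglyMeasurable (by fun_prop)) ?_
    filter_upwards [ae_restrict_mem measurableSet_Ioi] with x hx
    rw [norm_of_nonneg (div_nonneg (sq_nonneg _) (rpow_pos_of_pos (hpos x hx) _).le)]
    exact hdecay x hx
  have hBK : B ≤ K * I := by
    rw [← integral_const_mul]
    exact setIntegral_mono_on hgw (hI.const_mul K) measurableSet_Ioi hdecay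
  have hCS : (∫ x in Set.Ioi 0, exp (-(t * x)) * y x ∂μ) ^ 2 ≤ B * A :=
    sq_integral_mul_le_weighted (Measurable.aestronglyMeasurable (by fun_prop))
      hy.aestronglyMeasurable (Measurable.aestronglyMeasurable (by fun_prop))
      ((ae_restrict_mem measurableSet_Ioi).mono fun x hx => rpow_pos_of_pos (hpos x hx) _) hgw hN
  calc |y 0 + ∫ x in Set.Ioi 0, exp (-(t * x)) * y x ∂μ| ^ 2
      ≤ (y 0 ^ 2 + A) * (1 + B) := by
        rw [sq_abs]; exact sq_add_le_mul_one_add hA0 hB0 (hCS.trans_eq (mul_comm _ _))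
    _ ≤ (y 0 ^ 2 + A) * (K * (1 + I)) := by gcongr; nlinarith
    _ = _ := by simp only [K]; ring

lemma one_add_rpow_neg_le_mul {δ t T : ℝ} (hδ : 0 ≤ δ) (ht : 0 < t) (htT : t ≤ T) :
    1 + t ^ (-δ) ≤ (1 + T ^ δ) * t ^ (-δ) := by
  have h : 1 ≤ T ^ δ * t ^ (-δ) := by
    rw [rpow_neg ht.le, ← div_eq_mul_inv, ← div_rpow (ht.le.trans htT) ht.le]
    exact one_le_rpow ((one_le_div ht).mpr htT) hδ
  linarith

lemma exists_abs_le_mul_rpow_of_sq_le {g : ℝ → ℝ} {c δ T : ℝ} (hδ : 0 ≤ δ) (hT : 0 < T)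
    (hg : ∀ t, 0 < t → |g t| ^ 2 ≤ c * (1 + t ^ (-δ))) :
    ∃ C : ℝ, ∀ t ∈ Set.Ioc (0 : ℝ) T, |g t| ≤ C * t ^ (-δ / 2) := by
  have hc : 0 ≤ c := nonneg_of_mul_nonneg_left ((sq_nonneg _).trans (hg T hT))
    (by positivity)
  refine ⟨√(c * (1 + T ^ δ)), fun t ⟨ht, htT⟩ => ?_⟩
  have hsq : |g t| ^ 2 ≤ c * (1 + T ^ δ) * t ^ (-δ) := by
    rw [mul_assoc]; exact (hg t ht).trans (by gcongr; exact one_add_rpow_neg_le_mul hδ ht htT)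
  calc |g t| = √(|g t| ^ 2) := (sqrt_sq (abs_nonneg _)).symm
    _ ≤ √(c * (1 + T ^ δ) * t ^ (-δ)) := sqrt_le_sqrt hsq
    _ = _ := by
      rw [sqrt_mul' _ (rpow_nonneg ht.le _), sqrt_eq_rpow (t ^ (-δ)), ← rpow_mul ht.le]
      congr 2
      ring

/-- Let `μ` be a Borel measure on `(0,∞)`, `η < η̃` with `∫ (1+x)^{-η̃} dμ < ∞`, and
`y` measurable with `y(0)² + ∫ y(x)² (1+x)^η dμ < ∞`. Then for every `t > 0`,
`|y(0) + ∫ e^{-tx} y(x) dμ|² ≤ (1 + ∫ (1+x)^{-η̃} dμ) κ(η̃−η)² (1 + t^{-(η̃−η)}) N`;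
in particular for each `T > 0` there is `C` with `|g(t)| ≤ C t^{-(η̃−η)/2}` on `(0,T]`. -/
theorem projection_singular_bound (μ : Measure ℝ) (η ηt : ℝ) (hηη : η < ηt)
    (y : ℝ → ℝ) (hy : Measurable y)
    (hI : IntegrableOn (fun x => (1 + x) ^ (-ηt)) (Set.Ioi 0) μ)
    (hN : IntegrableOn (fun x => y x ^ 2 * (1 + x) ^ η) (Set.Ioi 0) μ) :
    (∀ t : ℝ, 0 < t →
      |y 0 + ∫ x in Set.Ioi 0, Real.exp (-(t * x)) * y x ∂μ| ^ 2 ≤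
        (1 + ∫ x in Set.Ioi 0, (1 + x) ^ (-ηt) ∂μ) * kappa (ηt - η) ^ 2 *
          (1 + t ^ (-(ηt - η))) *
          (y 0 ^ 2 + ∫ x in Set.Ioi 0, y x ^ 2 * (1 + x) ^ η ∂μ)) ∧
    ∀ T : ℝ, 0 < T → ∃ C : ℝ, ∀ t ∈ Set.Ioc (0 : ℝ) T,
      |y 0 + ∫ x in Set.Ioi 0, Real.exp (-(t * x)) * y x ∂μ| ≤
        C * t ^ (-(ηt - η) / 2) := by
  have hbound := fun t (ht : 0 < t) => sq_abs_projection_le μ hηη.le hy hI hN ht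
  refine ⟨hbound, fun T hT => exists_abs_le_mul_rpow_of_sq_le (sub_nonneg.mpr hηη.le) hT
    fun t ht => (hbound t ht).trans_eq (mul_right_comm _ _ _)⟩
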